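/- Let r ≥ 1, let K = ℚ(ζ) be the 5^{r+1}-th cyclotomic field with ζ a primitive 5^{r+1}-th root of unity, and let 𝓞 be its ring of integers. Let d be an integer with d ≡ 2 (mod 5) and d² ≡ −1 (mod 5^{r+1}). Let 𝔔 be a maximal ideal of 𝓞 with 5 ∉ 𝔔, let F = 𝓞/𝔔 be its residue field, and let φ : 𝓞 → F be the quotient map. Then the six points of ℙ²(F) with coordinate triples (φ(ζ)²,φ(ζ),1), (φ(ζ)^{2d'},φ(ζ)^{d'},1), (φ(ζ)^{−2},φ(ζ)^{−1},1), (φ(ζ)^{−2d'},φ(ζ)^{−d'},1), (1,0,0), (0,1,0) — where d' is any representative of d, the inverses existing since φ(ζ) is a root of unity in F — are in general position. -/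

import Mathlib

/-!
Let `z` be the image of `ζ` in `F`. Since `ζ - 1` divides `5 ^ (r + 1)` in `𝓞 K` and `5 ∉ 𝔔`,
`z ≠ 1`; so the order of `z` is a positive power of `5` and `z ^ a = z ^ b` forces
`a ≡ b (mod 5)`. As `d ≡ 2 (mod 5)`, the exponents `1, d, -1, -d` are distinct mod `5`, and so are
their doubles: the values `t = z, z ^ d, z⁻¹, z ^ (-d)` are distinct and have distinct squares.
The six points are then the four points `(t², t, 1)` of a parabola together with `(1, 0, 0)` and
`(0, 1, 0)`, and each general-position condition says that a polynomial in `t` (or in `t²`) of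
degree at most `3` has more roots than its degree.
-/

open NumberField

/-- Six points of the projective plane given by coordinate triples are *in general position* if:
they are pairwise distinct as projective points (no two triples are proportional), no three of
them lie on a line (no nonzero linear form vanishes at three of the triples), and the six do not
all lie on a conic (no nonzero quadratic form vanishes at all six triples). -/
def InGeneralPosition6 {k : Type*} [Field k] (P : Fin 6 → Fin 3 → k) : Prop :=
  (∀ i j : Fin 6, i ≠ j → ¬∃ c : k, c ≠ 0 ∧ P j = c • P i) ∧
  (∀ i j l : Fin 6, i ≠ j → i ≠ l → j ≠ l →
    ¬∃ α β γ : k, (α, β, γ) ≠ (0, 0, 0) ∧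
      ∀ m ∈ ({i, j, l} : Set (Fin 6)), α * P m 0 + β * P m 1 + γ * P m 2 = 0) ∧
  ¬∃ a b c d e f : k, (a, b, c, d, e, f) ≠ (0, 0, 0, 0, 0, 0) ∧
    ∀ m : Fin 6,
      a * P m 0 ^ 2 + b * P m 1 ^ 2 + c * P m 2 ^ 2 +
        d * (P m 0 * P m 1) + e * (P m 0 * P m 2) + f * (P m 1 * P m 2) = 0

open Function

section RootsOfUnity

theorem zpow_ne_zpow_of_not_dvd_sub {G₀ : Type*} [CommGroupWithZero G₀] {p n : ℕ}
    (hp : p.Prime) {x : G₀} (hx : x ^ p ^ n = 1) (hx1 : x ≠ 1) {a b : ℤ}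
    (hab : ¬(p : ℤ) ∣ a - b) : x ^ a ≠ x ^ b := by
  obtain ⟨k, -, hord⟩ := (Nat.dvd_prime_pow hp).mp (orderOf_dvd_of_pow_eq_one hx)
  have hk : k ≠ 0 := by
    rintro rfl
    exact hx1 (orderOf_eq_one_iff.mp (by simpa using hord))
  have hx0 : x ≠ 0 := by
    rintro rfl
    simp [hp.ne_zero] at hx
  intro h
  have hsub : x ^ (a - b) = 1 := by rw [zpow_sub₀ hx0, h, div_self (zpow_ne_zero _ hx0)]
  have hdvd := ((IsPrimitiveRoot.orderOf x).zpow_eq_one_iff_dvd _).mp hsub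
  rw [hord, Nat.cast_pow] at hdvd
  exact hab ((dvd_pow_self _ hk).trans hdvd)

theorem injective_zpow_of_dvd_sub {G₀ ι : Type*} [CommGroupWithZero G₀] {p n : ℕ} (hp : p.Prime)
    {x : G₀} (hx : x ^ p ^ n = 1) (hx1 : x ≠ 1) {e : ι → ℤ}
    (he : ∀ i j, (p : ℤ) ∣ e i - e j → i = j) : Injective fun i => x ^ e i :=
  fun i j h => by_contra fun hij => zpow_ne_zpow_of_not_dvd_sub hp hx hx1 (mt (he i j) hij) h

theorem Ideal.Quotient.mk_ne_one_of_isPrimitiveRoot {R : Type*} [CommRing R] [IsDomain R]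
    {Q : Ideal R} [Q.IsPrime] {p n : ℕ} (hp : p.Prime) {ζ : R}
    (hζ : IsPrimitiveRoot ζ (p ^ (n + 1))) (hpQ : (p : R) ∉ Q) : Ideal.Quotient.mk Q ζ ≠ 1 := by
  intro h
  have hζQ : ζ - 1 ∈ Q := Ideal.Quotient.eq.mp (h.trans (map_one _).symm)
  have hpow : (p : R) ^ (n + 1) ∈ Q := by
    simpa using Ideal.mem_of_dvd _
      (hζ.sub_one_dvd_natCast (Nat.one_lt_pow n.succ_ne_zero hp.one_lt)) hζQ
  exact hpQ (‹Q.IsPrime›.mem_of_pow_mem _ hpow)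

end RootsOfUnity

section Lines

variable {k : Type*} [Field k] {n : ℕ}

def OnCommonLine (P : Fin n → Fin 3 → k) (s : Set (Fin n)) : Prop :=
  ∃ α β γ : k, (α, β, γ) ≠ (0, 0, 0) ∧ ∀ m ∈ s, α * P m 0 + β * P m 1 + γ * P m 2 = 0

theorem onCommonLine_pair (P : Fin n → Fin 3 → k) (i j : Fin n) : OnCommonLine P {i, j} := by
  obtain ⟨v, hv0, hv⟩ := Matrix.exists_mulVec_eq_zero_iff.mpr
    (Matrix.det_zero_of_row_eq (M := Matrix.of ![P i, P j, P j]) (i := 1) (j := 2) (by decide) rfl)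
  refine ⟨v 0, v 1, v 2, fun h => hv0 ?_, ?_⟩
  · simp only [Prod.mk.injEq] at h
    ext m
    fin_cases m <;> simp [h]
  · have h0 := congrFun hv 0
    have h1 := congrFun hv 1
    simp only [Matrix.mulVec, dotProduct, Fin.sum_univ_three, Matrix.of_apply, Matrix.cons_val_zero,
      Matrix.cons_val_one, Pi.zero_apply] at h0 h1
    rintro m (rfl | rfl)
    · linear_combination h0
    · linear_combination h1

theorem onCommonLine_of_eq_smul (P : Fin n → Fin 3 → k) {i j : Fin n} (l : Fin n) {c : k}
    (hc : P j = c • P i) : OnCommonLine P {i, j, l} := by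
  obtain ⟨α, β, γ, hne, hv⟩ := onCommonLine_pair P i l
  refine ⟨α, β, γ, hne, ?_⟩
  rintro m (rfl | rfl | rfl)
  · exact hv m (by simp)
  · have hi := hv i (by simp)
    simp only [hc, Pi.smul_apply, smul_eq_mul]
    linear_combination c * hi
  · exact hv m (by simp)

theorem forall_not_onCommonLine_of_lt {P : Fin n → Fin 3 → k}
    (h : ∀ i j l : Fin n, i < j → j < l → ¬OnCommonLine P {i, j, l}) :
    ∀ i j l : Fin n, i ≠ j → i ≠ l → j ≠ l → ¬OnCommonLine P {i, j, l} := by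
  intro i j l hij hil hjl
  have perm : ∀ a b c : Fin n, a < b → b < c →
      (∀ m, m = a ∨ m = b ∨ m = c ↔ m = i ∨ m = j ∨ m = l) → ¬OnCommonLine P {i, j, l} := by
    intro a b c hab hbc hs
    convert h a b c hab hbc using 2
    ext m
    simp only [Set.mem_insert_iff, Set.mem_singleton_iff, hs]
  rcases hij.lt_or_gt with hij | hij <;> rcases hil.lt_or_gt with hil | hil <;>
    rcases hjl.lt_or_gt with hjl | hjl
  · exact h i j l hij hjl
  · exact perm i l j hil hjl fun _ => by tauto
  · exact absurd (hij.trans hjl) (lt_asymm hil)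
  · exact perm l i j hil hij fun _ => by tauto
  · exact perm j i l hij hil fun _ => by tauto
  · exact absurd (hil.trans hjl) (lt_asymm hij)
  · exact perm j l i hjl hil fun _ => by tauto
  · exact perm l j i hjl hij fun _ => by tauto

theorem inGeneralPosition6_of_forall_not_onCommonLine {P : Fin 6 → Fin 3 → k}
    (hline : ∀ i j l : Fin 6, i < j → j < l → ¬OnCommonLine P {i, j, l})
    (hconic : ¬∃ a b c d e f : k, (a, b, c, d, e, f) ≠ (0, 0, 0, 0, 0, 0) ∧
      ∀ m : Fin 6, a * P m 0 ^ 2 + b * P m 1 ^ 2 + c * P m 2 ^ 2 +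
        d * (P m 0 * P m 1) + e * (P m 0 * P m 2) + f * (P m 1 * P m 2) = 0) :
    InGeneralPosition6 P := by
  have hline' := forall_not_onCommonLine_of_lt hline
  refine ⟨fun i j hij ⟨c, _, hc⟩ => ?_, hline', hconic⟩
  obtain ⟨l, hil, hjl⟩ := (by decide : ∀ i j : Fin 6, ∃ l, i ≠ l ∧ j ≠ l) i j
  exact hline' i j l hij hil hjl (onCommonLine_of_eq_smul P l hc)

end Lines

section Parabola

variable {k : Type*} [Field k]

theorem quadratic_eq_zero_of_two_roots_of_leading_eq_zero {α β γ s₁ s₂ : k} (h : s₁ ≠ s₂)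
    (hα : α = 0) (e₁ : α * s₁ ^ 2 + β * s₁ + γ = 0) (e₂ : α * s₂ ^ 2 + β * s₂ + γ = 0) :
    (α, β, γ) = (0, 0, 0) := by
  subst hα
  have hβ : β = 0 := by
    have : β * (s₁ - s₂) = 0 := by linear_combination e₁ - e₂
    simpa [sub_eq_zero, h] using this
  subst hβ
  simpa using e₁

theorem quadratic_eq_zero_of_two_roots_of_middle_eq_zero {α β γ s₁ s₂ : k}
    (h : s₁ ^ 2 ≠ s₂ ^ 2) (hβ : β = 0) (e₁ : α * s₁ ^ 2 + β * s₁ + γ = 0)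
    (e₂ : α * s₂ ^ 2 + β * s₂ + γ = 0) : (α, β, γ) = (0, 0, 0) := by
  subst hβ
  have hα : α = 0 := by
    have : α * (s₁ ^ 2 - s₂ ^ 2) = 0 := by linear_combination e₁ - e₂
    simpa [sub_eq_zero, h] using this
  subst hα
  simpa using e₁

theorem quadratic_eq_zero_of_three_roots {α β γ s₁ s₂ s₃ : k} (h₁₂ : s₁ ≠ s₂) (h₁₃ : s₁ ≠ s₃)
    (h₂₃ : s₂ ≠ s₃) (e₁ : α * s₁ ^ 2 + β * s₁ + γ = 0) (e₂ : α * s₂ ^ 2 + β * s₂ + γ = 0)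
    (e₃ : α * s₃ ^ 2 + β * s₃ + γ = 0) : (α, β, γ) = (0, 0, 0) := by
  have hα : α = 0 := by
    have : α * ((s₁ - s₂) * (s₁ - s₃) * (s₂ - s₃)) = 0 := by
      linear_combination (s₂ - s₃) * e₁ - (s₁ - s₃) * e₂ + (s₁ - s₂) * e₃
    simpa [sub_eq_zero, h₁₂, h₁₃, h₂₃] using this
  exact quadratic_eq_zero_of_two_roots_of_leading_eq_zero h₁₂ hα e₁ e₂

theorem cubic_eq_zero_of_four_roots {a b c d : k} {s : Fin 4 → k} (hs : Injective s)
    (h : ∀ i, a + b * s i + c * s i ^ 2 + d * s i ^ 3 = 0) : a = 0 ∧ b = 0 ∧ c = 0 ∧ d = 0 := by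
  have := Matrix.eq_zero_of_forall_index_sum_mul_pow_eq_zero (v := ![a, b, c, d]) hs
    fun j => by simpa [Fin.sum_univ_four] using h j
  simp_all [funext_iff, Fin.forall_fin_succ]

theorem inGeneralPosition6_parabola {t : Fin 4 → k} (ht : Injective t)
    (ht2 : Injective fun i => t i ^ 2) :
    InGeneralPosition6 ![![t 0 ^ 2, t 0, 1], ![t 1 ^ 2, t 1, 1], ![t 2 ^ 2, t 2, 1],
      ![t 3 ^ 2, t 3, 1], ![1, 0, 0], ![0, 1, 0]] := by
  refine inGeneralPosition6_of_forall_not_onCommonLine ?_ ?_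
  · rintro i j l hij hjl ⟨α, β, γ, hne, hv⟩
    have H₁ := hv i (by simp)
    have H₂ := hv j (by simp)
    have H₃ := hv l (by simp)
    fin_cases i <;> fin_cases j <;> fin_cases l <;> simp at hij hjl H₁ H₂ H₃ <;> apply hne
    -- in a sorted triple the finite points come first; `(1, 0, 0)` lies on the line iff `α = 0`,
    -- and `(0, 1, 0)` iff `β = 0`
    all_goals first
      | exact quadratic_eq_zero_of_three_roots (ht.ne (by decide)) (ht.ne (by decide))
          (ht.ne (by decide)) H₁ H₂ H₃
      | exact quadratic_eq_zero_of_two_roots_of_leading_eq_zero (ht.ne (by decide)) H₃ H₁ H₂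
      | exact quadratic_eq_zero_of_two_roots_of_middle_eq_zero (ht2.ne (by decide)) H₃ H₁ H₂
      | simpa [H₂, H₃] using H₁
  · rintro ⟨a, b, c, d, e, f, hne, hv⟩
    have ha : a = 0 := by simpa using hv 4
    have hb : b = 0 := by simpa using hv 5
    subst ha hb
    obtain ⟨hc, hf, he, hd⟩ := cubic_eq_zero_of_four_roots (a := c) (b := f) (c := e) (d := d) ht
      fun i => by
        have H := hv (Fin.castSucc (Fin.castSucc i))
        fin_cases i <;> simp at H ⊢ <;> linear_combination H
    simp [hc, hf, he, hd] at hne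

end Parabola

theorem reduction_generalPosition_general (r : ℕ) (K : Type*) [Field K] (ζ : 𝓞 K)
    (hζ : IsPrimitiveRoot ζ (5 ^ (r + 1))) (d : ℤ) (hd1 : d ≡ 2 [ZMOD 5])
    (Q : Ideal (𝓞 K)) (hQ : Q.IsMaximal)
    (h5 : (5 : 𝓞 K) ∉ Q) :
    letI : Field (𝓞 K ⧸ Q) := Ideal.Quotient.field Q
    InGeneralPosition6
      ![![Ideal.Quotient.mk Q ζ ^ 2, Ideal.Quotient.mk Q ζ, 1],
        ![Ideal.Quotient.mk Q ζ ^ (2 * d), Ideal.Quotient.mk Q ζ ^ d, 1],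
        ![Ideal.Quotient.mk Q ζ ^ (-2 : ℤ), Ideal.Quotient.mk Q ζ ^ (-1 : ℤ), 1],
        ![Ideal.Quotient.mk Q ζ ^ (-(2 * d)), Ideal.Quotient.mk Q ζ ^ (-d), 1],
        ![1, 0, 0], ![0, 1, 0]] := by
  let _ : Field (𝓞 K ⧸ Q) := Ideal.Quotient.field Q
  set z := Ideal.Quotient.mk Q ζ
  have hz : z ^ 5 ^ (r + 1) = 1 := by rw [← map_pow, hζ.pow_eq_one, map_one]
  have hz1 : z ≠ 1 :=
    Ideal.Quotient.mk_ne_one_of_isPrimitiveRoot Nat.prime_five hζ (by exact_mod_cast h5)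
  have hd : (5 : ℤ) ∣ d - 2 := hd1.symm.dvd
  let e : Fin 4 → ℤ := ![1, d, -1, -d]
  have ht := injective_zpow_of_dvd_sub Nat.prime_five hz hz1 (e := e) <| by
    intro i j; fin_cases i <;> fin_cases j <;> simp [e] <;> omega
  have ht2 := injective_zpow_of_dvd_sub Nat.prime_five hz hz1 (e := fun i => e i * 2) <| by
    intro i j; fin_cases i <;> fin_cases j <;> simp [e] <;> omega
  simp only [zpow_mul, zpow_ofNat] at ht2
  convert inGeneralPosition6_parabola ht ht2 using 1
  simp [e, mul_comm (2 : ℤ), zpow_mul, zpow_neg]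

/-- Let `r ≥ 1`, let `K = ℚ(ζ)` be the `5^(r+1)`-th cyclotomic field with `ζ` a primitive
`5^(r+1)`-th root of unity, and let `𝓞 K` be its ring of integers.  Let `d` be an integer with
`d ≡ 2 (mod 5)` and `d² ≡ −1 (mod 5^(r+1))`.  Let `𝔔` be a maximal ideal of `𝓞 K` with
`5 ∉ 𝔔`, let `F = 𝓞 K ⧸ 𝔔` be its residue field, and let `φ` be the quotient map.  Then the
six points of `ℙ²(F)` with coordinate triples `(φ(ζ)²,φ(ζ),1), (φ(ζ)^(2d),φ(ζ)^d,1),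
(φ(ζ)^(−2),φ(ζ)^(−1),1), (φ(ζ)^(−2d),φ(ζ)^(−d),1), (1,0,0), (0,1,0)` are in general
position. -/
theorem reduction_generalPosition (r : ℕ) (hr : 1 ≤ r) (K : Type*) [Field K] [NumberField K]
    [IsCyclotomicExtension {5 ^ (r + 1)} ℚ K] (ζ : 𝓞 K)
    (hζ : IsPrimitiveRoot ζ (5 ^ (r + 1))) (d : ℤ) (hd1 : d ≡ 2 [ZMOD 5])
    (hd2 : d ^ 2 ≡ -1 [ZMOD (5 ^ (r + 1))]) (Q : Ideal (𝓞 K)) (hQ : Q.IsMaximal)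
    (h5 : (5 : 𝓞 K) ∉ Q) :
    letI : Field (𝓞 K ⧸ Q) := Ideal.Quotient.field Q
    InGeneralPosition6
      ![![Ideal.Quotient.mk Q ζ ^ 2, Ideal.Quotient.mk Q ζ, 1],
        ![Ideal.Quotient.mk Q ζ ^ (2 * d), Ideal.Quotient.mk Q ζ ^ d, 1],
        ![Ideal.Quotient.mk Q ζ ^ (-2 : ℤ), Ideal.Quotient.mk Q ζ ^ (-1 : ℤ), 1],
        ![Ideal.Quotient.mk Q ζ ^ (-(2 * d)), Ideal.Quotient.mk Q ζ ^ (-d), 1],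
        ![1, 0, 0], ![0, 1, 0]] :=
  reduction_generalPosition_general r K ζ hζ d hd1 Q hQ h5
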